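/- arXiv:1106.3762 — 6 statements merged into one kernel-verified Lean document; each statement's English description precedes it below -/
import Mathlib

section
/- The lattice width of 2Υ equals 4, where Υ = Conv{(-1,-1),(1,0),(0,1)}. -/
open Set

def toR2 (q : ℤ × ℤ) : ℝ × ℝ := ((q.1 : ℝ), (q.2 : ℝ))

def isLatticePt (p : ℝ × ℝ) : Prop := ∃ q : ℤ × ℤ, p = toR2 q

def IsLatticePolygon (Δ : Set (ℝ × ℝ)) : Prop :=
  ∃ S : Finset (ℤ × ℤ), Δ = convexHull ℝ (toR2 '' ↑S)

def IsZAffine (φ : ℝ × ℝ → ℝ × ℝ) : Prop :=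
  ∃ a b c d e f : ℤ, (a * d - b * c = 1 ∨ a * d - b * c = -1) ∧
    ∀ p : ℝ × ℝ, φ p = ((a : ℝ) * p.1 + (b : ℝ) * p.2 + (e : ℝ),
      (c : ℝ) * p.1 + (d : ℝ) * p.2 + (f : ℝ))

def widthLE (Δ : Set (ℝ × ℝ)) (s : ℤ) : Prop :=
  ∃ φ, IsZAffine φ ∧ ∀ p ∈ Δ, 0 ≤ (φ p).2 ∧ (φ p).2 ≤ (s : ℝ)

open Classical in
noncomputable def latticeWidth (Δ : Set (ℝ × ℝ)) : ℤ :=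
  if Δ = ∅ then -1 else sInf {s : ℤ | 0 ≤ s ∧ widthLE Δ s}

def simplexPoly (d : ℤ) : Set (ℝ × ℝ) :=
  convexHull ℝ {((0:ℝ), (0:ℝ)), ((d:ℝ), (0:ℝ)), ((0:ℝ), (d:ℝ))}

def interiorPoly (Δ : Set (ℝ × ℝ)) : Set (ℝ × ℝ) :=
  convexHull ℝ {p | p ∈ interior Δ ∧ isLatticePt p}

def equivPoly (Δ Δ' : Set (ℝ × ℝ)) : Prop :=
  ∃ φ, IsZAffine φ ∧ φ '' Δ = Δ'

def TwoDim (Δ : Set (ℝ × ℝ)) : Prop := affineSpan ℝ Δ = ⊤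

def twoUpsilon : Set (ℝ × ℝ) :=
  convexHull ℝ {((-2:ℝ), (-2:ℝ)), ((2:ℝ), (0:ℝ)), ((0:ℝ), (2:ℝ))}

lemma two_upsilon_snd_bound : twoUpsilon ⊆ {p : ℝ × ℝ | -2 ≤ p.2 ∧ p.2 ≤ 2} := by
  apply convexHull_min
  · intro p hp
    rcases hp with h | h | h <;> subst h <;> norm_num
  · intro x hx y hy a b ha hb hab
    simp only [Set.mem_setOf_eq] at *
    have h2 : (a • x + b • y).2 = a * x.2 + b * y.2 := by
      simp [Prod.smul_snd]
    rw [h2]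
    constructor <;> nlinarith [hx.1, hx.2, hy.1, hy.2]

/-- The lattice width of 2Υ equals 4, where Υ = Conv{(-1,-1),(1,0),(0,1)}. -/
theorem lattice_width_two_upsilon : latticeWidth twoUpsilon = 4 := by
  have hv1 : ((-2:ℝ), (-2:ℝ)) ∈ twoUpsilon := subset_convexHull ℝ _ (by simp)
  have hv2 : ((2:ℝ), (0:ℝ)) ∈ twoUpsilon := subset_convexHull ℝ _ (by simp)
  have hv3 : ((0:ℝ), (2:ℝ)) ∈ twoUpsilon := subset_convexHull ℝ _ (by simp)
  have hne : twoUpsilon ≠ ∅ := Set.nonempty_iff_ne_empty.mp ⟨_, hv1⟩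
  rw [latticeWidth, if_neg hne]
  have hmem4 : (4:ℤ) ∈ {s : ℤ | 0 ≤ s ∧ widthLE twoUpsilon s} := by
    refine ⟨by norm_num, ⟨fun p => (p.1, p.2 + 2), ⟨1, 0, 0, 1, 0, 2, by norm_num,
      fun p => by push_cast; ring_nf⟩, ?_⟩⟩
    intro p hp
    have := two_upsilon_snd_bound hp
    simp only [Set.mem_setOf_eq] at this
    constructor <;> simp <;> linarith [this.1, this.2]
  have hbdd : BddBelow {s : ℤ | 0 ≤ s ∧ widthLE twoUpsilon s} := ⟨0, fun x hx => hx.1⟩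
  refine le_antisymm (csInf_le hbdd hmem4) (le_csInf ⟨4, hmem4⟩ ?_)
  rintro s ⟨hs0, φ, ⟨a, b, c, d, e, f, hdet, hφ⟩, hbound⟩
  have h1 := hbound _ hv1
  have h2 := hbound _ hv2
  have h3 := hbound _ hv3
  rw [hφ] at h1 h2 h3
  simp only at h1 h2 h3
  have hcd : ¬ (c = 0 ∧ d = 0) := by
    rintro ⟨rfl, rfl⟩
    simp at hdet
  have e1 : -s ≤ 4*c + 2*d ∧ 4*c + 2*d ≤ s := by
    constructor <;> [exact_mod_cast (by push_cast; linarith [h1.1, h1.2, h2.1, h2.2] :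
      (-s:ℝ) ≤ 4*c + 2*d); exact_mod_cast (by push_cast; linarith [h1.1, h1.2, h2.1, h2.2] :
      ((4*c + 2*d : ℤ) : ℝ) ≤ s)]
  have e2 : -s ≤ 2*c + 4*d ∧ 2*c + 4*d ≤ s := by
    constructor <;> [exact_mod_cast (by push_cast; linarith [h1.1, h1.2, h3.1, h3.2] :
      (-s:ℝ) ≤ 2*c + 4*d); exact_mod_cast (by push_cast; linarith [h1.1, h1.2, h3.1, h3.2] :
      ((2*c + 4*d : ℤ) : ℝ) ≤ s)]
  have e3 : -s ≤ 2*c - 2*d ∧ 2*c - 2*d ≤ s := by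
    constructor <;> [exact_mod_cast (by push_cast; linarith [h2.1, h2.2, h3.1, h3.2] :
      (-s:ℝ) ≤ 2*c - 2*d); exact_mod_cast (by push_cast; linarith [h2.1, h2.2, h3.1, h3.2] :
      ((2*c - 2*d : ℤ) : ℝ) ≤ s)]
  omega
end

section
/- For any two-dimensional lattice polygon Δ, the lattice width of the interior lattice polygon Δ^(1) satisfies lw(Δ^(1)) ≤ lw(Δ) − 2. -/
open Set

/-!
The second coordinate of a unimodular map realising a width `s` of `Δ` is a nonconstant affine
function `ℓ` with integer values at lattice points. Being open, `ℓ` sends the interior of `Δ`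
into the open strip `0 < ℓ < s`, so every interior lattice point satisfies `1 ≤ ℓ ≤ s - 1`, and
by convexity so does `Δ⁽¹⁾`. If `Δ⁽¹⁾` is empty, it suffices that a two-dimensional `Δ` has
positive width, which holds because `ℓ` cannot be constant on the nonempty interior of `Δ`.
-/

theorem AffineMap.mapsTo_interior_Ioo {E : Type*} [NormedAddCommGroup E] [NormedSpace ℝ E]
    [FiniteDimensional ℝ E] (ℓ : E →ᵃ[ℝ] ℝ) (hℓ : ℓ.linear ≠ 0) {Δ : Set E} {a b : ℝ}
    (h : MapsTo ℓ Δ (Icc a b)) : MapsTo ℓ (interior Δ) (Ioo a b) := by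
  have hopen : IsOpenMap ℓ := AffineMap.isOpenMap_linear_iff.mp <|
    ℓ.linear.isOpenMap_of_finiteDimensional (LinearMap.surjective_of_ne_zero hℓ)
  intro p hp
  rw [← interior_Icc]
  exact interior_mono h.image_subset (hopen.image_interior_subset Δ ⟨p, hp, rfl⟩)

def affineForm (c d f : ℝ) : ℝ × ℝ →ᵃ[ℝ] ℝ where
  toFun p := c * p.1 + d * p.2 + f
  linear := c • LinearMap.fst ℝ ℝ ℝ + d • LinearMap.snd ℝ ℝ ℝ
  map_vadd' p v := by
    simp only [vadd_eq_add, Prod.fst_add, Prod.snd_add, LinearMap.add_apply,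
      LinearMap.smul_apply, LinearMap.fst_apply, LinearMap.snd_apply, smul_eq_mul]
    ring

@[simp]
theorem affineForm_apply (c d f : ℝ) (p : ℝ × ℝ) :
    affineForm c d f p = c * p.1 + d * p.2 + f := rfl

theorem affineForm_linear_ne_zero {c d f : ℝ} (h : c ≠ 0 ∨ d ≠ 0) :
    (affineForm c d f).linear ≠ 0 := by
  intro h0
  have hc : c = 0 := by simpa [affineForm] using LinearMap.congr_fun h0 (1, 0)
  have hd : d = 0 := by simpa [affineForm] using LinearMap.congr_fun h0 (0, 1)
  exact h.elim (· hc) (· hd)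

theorem affineForm_toR2 (c d f : ℤ) (q : ℤ × ℤ) :
    affineForm c d f (toR2 q) = ((c * q.1 + d * q.2 + f : ℤ) : ℝ) := by
  simp [toR2]

theorem isZAffine_id : IsZAffine id :=
  ⟨1, 0, 0, 1, 0, 0, Or.inl (by norm_num), fun p => by simp⟩

theorem IsZAffine.add_toR2 {φ : ℝ × ℝ → ℝ × ℝ} (hφ : IsZAffine φ) (v : ℤ × ℤ) :
    IsZAffine (fun p => φ p + toR2 v) := by
  obtain ⟨a, b, c, d, e, f, hdet, hφ⟩ := hφ
  refine ⟨a, b, c, d, e + v.1, f + v.2, hdet, fun p => ?_⟩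
  simp only [hφ, toR2, Prod.mk_add_mk, Int.cast_add]
  ring_nf

theorem IsZAffine.snd_eq_affineForm {φ : ℝ × ℝ → ℝ × ℝ} (hφ : IsZAffine φ) :
    ∃ c d f : ℤ, ((c : ℝ) ≠ 0 ∨ (d : ℝ) ≠ 0) ∧ ∀ p, (φ p).2 = affineForm c d f p := by
  obtain ⟨a, b, c, d, e, f, hdet, hφ⟩ := hφ
  refine ⟨c, d, f, ?_, fun p => by simp [hφ]⟩
  by_contra! h
  obtain ⟨rfl, rfl⟩ : c = 0 ∧ d = 0 := by exact_mod_cast h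
  omega

namespace widthLE

variable {Δ : Set (ℝ × ℝ)} {s : ℤ}

theorem nonneg (hw : widthLE Δ s) (hne : Δ.Nonempty) : 0 ≤ s := by
  obtain ⟨φ, -, hb⟩ := hw
  obtain ⟨p, hp⟩ := hne
  exact_mod_cast (hb p hp).1.trans (hb p hp).2

theorem pos (hw : widthLE Δ s) (hint : (interior Δ).Nonempty) : 0 < s := by
  obtain ⟨φ, hφ, hb⟩ := hw
  obtain ⟨c, d, f, hcd, hφ2⟩ := hφ.snd_eq_affineForm
  obtain ⟨p, hp⟩ := hint
  have hΔ : MapsTo (affineForm c d f) Δ (Icc 0 s) := fun q hq => hφ2 q ▸ hb q hq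
  obtain ⟨h0, hs⟩ := (affineForm c d f).mapsTo_interior_Ioo (affineForm_linear_ne_zero hcd) hΔ hp
  exact_mod_cast h0.trans hs

theorem interiorPoly (hw : widthLE Δ s) : widthLE (interiorPoly Δ) (s - 2) := by
  obtain ⟨φ, hφ, hb⟩ := hw
  obtain ⟨c, d, f, hcd, hφ2⟩ := hφ.snd_eq_affineForm
  set ℓ := affineForm c d f
  have hΔ : MapsTo ℓ Δ (Icc 0 s) := fun q hq => hφ2 q ▸ hb q hq
  have hinterior := ℓ.mapsTo_interior_Ioo (affineForm_linear_ne_zero hcd) hΔ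
  have hlattice : {p | p ∈ interior Δ ∧ isLatticePt p} ⊆ ℓ ⁻¹' Icc 1 (s - 1) := by
    rintro _ ⟨hp, q, rfl⟩
    have hq := hinterior hp
    simp only [ℓ, mem_preimage, affineForm_toR2, mem_Ioo, mem_Icc] at hq ⊢
    obtain ⟨h0, hs⟩ : 0 < c * q.1 + d * q.2 + f ∧ c * q.1 + d * q.2 + f < s := by
      exact_mod_cast hq
    constructor
    · exact_mod_cast h0
    · exact_mod_cast (by omega : c * q.1 + d * q.2 + f ≤ s - 1)
  have hpoly : _root_.interiorPoly Δ ⊆ ℓ ⁻¹' Icc 1 (s - 1) :=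
    convexHull_min hlattice ((convex_Icc _ _).affine_preimage ℓ)
  refine ⟨_, hφ.add_toR2 (0, -1), fun p hp => ?_⟩
  obtain ⟨h1, hs⟩ := hpoly hp
  simp only [Prod.snd_add, toR2, hφ2]
  push_cast
  constructor <;> linarith

end widthLE

theorem IsLatticePolygon.convex {Δ : Set (ℝ × ℝ)} (hΔ : IsLatticePolygon Δ) : Convex ℝ Δ := by
  obtain ⟨S, rfl⟩ := hΔ
  exact convex_convexHull ℝ _

theorem IsLatticePolygon.exists_widthLE {Δ : Set (ℝ × ℝ)} (hΔ : IsLatticePolygon Δ) :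
    ∃ s, widthLE Δ s := by
  obtain ⟨S, rfl⟩ := hΔ
  obtain ⟨m, hm⟩ := (S.image Prod.snd).bddBelow
  obtain ⟨M, hM⟩ := (S.image Prod.snd).bddAbove
  have hstrip : convexHull ℝ (toR2 '' S) ⊆ univ ×ˢ Icc (m : ℝ) M := by
    refine convexHull_min ?_ (convex_univ.prod (convex_Icc _ _))
    rintro _ ⟨q, hq, rfl⟩
    have hq2 : q.2 ∈ S.image Prod.snd := Finset.mem_image_of_mem _ hq
    exact ⟨trivial, (by exact_mod_cast hm hq2 : (m : ℝ) ≤ q.2),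
      (by exact_mod_cast hM hq2 : (q.2 : ℝ) ≤ M)⟩
  refine ⟨M - m, _, isZAffine_id.add_toR2 (0, -m), fun p hp => ?_⟩
  obtain ⟨-, h1, h2⟩ := hstrip hp
  simp only [id, Prod.snd_add, toR2]
  push_cast
  constructor <;> linarith

theorem bddBelow_widths (Δ : Set (ℝ × ℝ)) : BddBelow {s : ℤ | 0 ≤ s ∧ widthLE Δ s} :=
  ⟨0, fun _ h => h.1⟩

theorem latticeWidth_le {Δ : Set (ℝ × ℝ)} {s : ℤ} (hne : Δ.Nonempty) (hw : widthLE Δ s) :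
    latticeWidth Δ ≤ s := by
  rw [latticeWidth, if_neg hne.ne_empty]
  exact csInf_le (bddBelow_widths Δ) ⟨hw.nonneg hne, hw⟩

theorem widthLE_latticeWidth {Δ : Set (ℝ × ℝ)} (hne : Δ.Nonempty) (h : ∃ s, widthLE Δ s) :
    widthLE Δ (latticeWidth Δ) := by
  obtain ⟨s, hs⟩ := h
  rw [latticeWidth, if_neg hne.ne_empty]
  have hmem : s ∈ {t : ℤ | 0 ≤ t ∧ widthLE Δ t} := ⟨hs.nonneg hne, hs⟩
  exact (Int.csInf_mem ⟨s, hmem⟩ (bddBelow_widths Δ)).2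

/-- For any two-dimensional lattice polygon Δ, lw(Δ⁽¹⁾) ≤ lw(Δ) − 2. -/
theorem lattice_width_interior_le (Δ : Set (ℝ × ℝ))
    (hΔ : IsLatticePolygon Δ) (h2 : TwoDim Δ) :
    latticeWidth (interiorPoly Δ) ≤ latticeWidth Δ - 2 := by
  have hint : (interior Δ).Nonempty := hΔ.convex.interior_nonempty_iff_affineSpan_eq_top.mpr h2
  have hw := widthLE_latticeWidth (hint.mono interior_subset) hΔ.exists_widthLE
  have hpos := hw.pos hint
  rcases (interiorPoly Δ).eq_empty_or_nonempty with hempty | hne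
  · rw [latticeWidth, if_pos hempty]
    omega
  · exact latticeWidth_le hne hw.interiorPoly
end

section
/- If a two-dimensional lattice polygon Δ has lattice width at most 3, then the convex hull of its interior lattice points contains no interior lattice points of its own; equivalently, if Δ^(1) has an interior lattice point then lw(Δ) ≥ 4. -/
open Set

/-- A ℤ-affine map sends lattice points to lattice points. -/
lemma zaffine_lattice {φ : ℝ × ℝ → ℝ × ℝ} (hφ : IsZAffine φ) {p : ℝ × ℝ}
    (hp : isLatticePt p) : isLatticePt (φ p) := by
  obtain ⟨a, b, c, d, e, f, _, hf⟩ := hφ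
  obtain ⟨q, rfl⟩ := hp
  refine ⟨(a * q.1 + b * q.2 + e, c * q.1 + d * q.2 + f), ?_⟩
  rw [hf]
  simp only [toR2, Prod.mk.injEq]
  push_cast
  exact ⟨by ring, by ring⟩

/-- A ℤ-affine map is (extensionally) a self-homeomorphism of the plane. -/
lemma zaffine_homeo {φ : ℝ × ℝ → ℝ × ℝ} (hφ : IsZAffine φ) :
    ∃ e : (ℝ × ℝ) ≃ₜ (ℝ × ℝ), ⇑e = φ := by
  obtain ⟨a, b, c, d, e, f, hdet, hf⟩ := hφ
  have hφeq : φ = fun p : ℝ × ℝ => ((a : ℝ) * p.1 + (b : ℝ) * p.2 + (e : ℝ),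
      (c : ℝ) * p.1 + (d : ℝ) * p.2 + (f : ℝ)) := funext hf
  subst hφeq
  set D : ℝ := ((a : ℝ) * d - (b : ℝ) * c) with hD
  have hD2 : D * D = 1 := by
    rcases hdet with hcase | hcase
    · have h1 : ((a * d - b * c : ℤ) : ℝ) = 1 := by rw [hcase]; norm_num
      push_cast at h1; rw [hD, h1]; ring
    · have h1 : ((a * d - b * c : ℤ) : ℝ) = -1 := by rw [hcase]; norm_num
      push_cast at h1; rw [hD, h1]; ring
  refine ⟨Homeomorph.mk ⟨_, fun p : ℝ × ℝ =>
      (D * ((d : ℝ) * (p.1 - e) - (b : ℝ) * (p.2 - f)),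
       D * ((a : ℝ) * (p.2 - f) - (c : ℝ) * (p.1 - e))), ?_, ?_⟩ ?_ ?_, rfl⟩
  · intro p
    dsimp only
    ext
    · dsimp only; linear_combination p.1 * hD2
    · dsimp only; linear_combination p.2 * hD2
  · intro p
    dsimp only
    ext
    · dsimp only; linear_combination (p.1 - e) * hD2
    · dsimp only; linear_combination (p.2 - f) * hD2
  · dsimp only [Equiv.coe_fn_mk]; fun_prop
  · dsimp only [Equiv.coe_fn_symm_mk]; fun_prop

lemma zaffine_preimage_strip_convex {φ : ℝ × ℝ → ℝ × ℝ} (hφ : IsZAffine φ)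
    (u v : ℝ) : Convex ℝ (φ ⁻¹' (Prod.snd ⁻¹' Icc u v)) := by
  obtain ⟨a, b, c, d, e, f, _, hf⟩ := hφ
  intro p hp q hq α β hα hβ hαβ
  simp only [mem_preimage, mem_Icc, hf] at hp hq ⊢
  have hβ' : β = 1 - α := by linarith
  subst hβ'
  have h1 : ((c : ℝ) * (α • p + (1 - α) • q).1 + (d : ℝ) * (α • p + (1 - α) • q).2 + (f : ℝ))
      = α * ((c : ℝ) * p.1 + (d : ℝ) * p.2 + f)
        + (1 - α) * ((c : ℝ) * q.1 + (d : ℝ) * q.2 + f) := by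
    simp only [Prod.smul_def, Prod.fst_add, Prod.snd_add, Prod.smul_fst, Prod.smul_snd,
      smul_eq_mul]
    ring
  rw [h1]
  have e1 := mul_le_mul_of_nonneg_left hp.1 hα
  have e2 := mul_le_mul_of_nonneg_left hq.1 hβ
  have e3 := mul_le_mul_of_nonneg_left hp.2 hα
  have e4 := mul_le_mul_of_nonneg_left hq.2 hβ
  constructor <;> nlinarith

/-- If Δ⁽¹⁾ has an interior lattice point then lw(Δ) ≥ 4. -/
theorem lw_ge_four_of_interior_interior_point (Δ : Set (ℝ × ℝ))
    (hΔ : IsLatticePolygon Δ) (h2 : TwoDim Δ)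
    (h : ∃ p, p ∈ interior (interiorPoly Δ) ∧ isLatticePt p) :
    4 ≤ latticeWidth Δ := by
  classical
  obtain ⟨S, hS⟩ := hΔ
  -- Δ is nonempty
  have hΔne : Δ ≠ ∅ := by
    intro h0
    have htop : ((⊤ : AffineSubspace ℝ (ℝ × ℝ)) : Set (ℝ × ℝ)).Nonempty := ⟨0, trivial⟩
    have h2' : affineSpan ℝ Δ = ⊤ := h2
    rw [← h2'] at htop
    rw [affineSpan_nonempty] at htop
    rw [h0] at htop
    exact not_nonempty_empty htop
  have hSne : S.Nonempty := by
    by_contra hS0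
    rw [Finset.not_nonempty_iff_eq_empty] at hS0
    apply hΔne
    rw [hS, hS0]
    simp
  set W : Set ℤ := {s : ℤ | 0 ≤ s ∧ widthLE Δ s} with hW
  -- the width set is nonempty
  have hWne : W.Nonempty := by
    set T : Finset ℤ := S.image Prod.snd with hT
    have hTne : T.Nonempty := hSne.image _
    set m : ℤ := T.min' hTne with hm
    set M : ℤ := T.max' hTne with hM
    have hmM : m ≤ M := T.min'_le _ (T.max'_mem hTne)
    refine ⟨M - m, ⟨by omega, ?_⟩⟩
    refine ⟨fun p => (p.1, p.2 - (m : ℝ)),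
      ⟨1, 0, 0, 1, 0, -m, Or.inl (by ring), fun p => by
        rw [Prod.ext_iff]; constructor <;> (push_cast; ring_nf; try ring)⟩, ?_⟩
    intro p hp
    have hsub : Δ ⊆ Prod.snd ⁻¹' Icc (m : ℝ) (M : ℝ) := by
      rw [hS]
      apply convexHull_min
      · rintro _ ⟨q, hq, rfl⟩
        have hq' : q ∈ S := by exact_mod_cast hq
        have hm1 : m ≤ q.2 := T.min'_le _ (Finset.mem_image_of_mem _ hq')
        have hM1 : q.2 ≤ M := T.le_max' _ (Finset.mem_image_of_mem _ hq')
        simp only [mem_preimage, mem_Icc, toR2]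
        exact ⟨by exact_mod_cast hm1, by exact_mod_cast hM1⟩
      · exact (convex_Icc _ _).linear_preimage (LinearMap.snd ℝ ℝ ℝ)
    have hpm := hsub hp
    simp only [mem_preimage, mem_Icc] at hpm
    constructor
    · simp only; linarith [hpm.1]
    · simp only; push_cast; linarith [hpm.2]
  -- every member of W is at least 4
  have hlb : ∀ s ∈ W, (4 : ℤ) ≤ s := by
    rintro s ⟨hs0, φ, hφZ, hstrip⟩
    by_contra hs4
    push_neg at hs4
    obtain ⟨e, he⟩ := zaffine_homeo hφZ
    obtain ⟨p, hpint, hplat⟩ := h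
    set A : Set (ℝ × ℝ) := {q | q ∈ interior Δ ∧ isLatticePt q} with hA
    have hAsub : A ⊆ φ ⁻¹' (Prod.snd ⁻¹' Icc (1 : ℝ) 2) := by
      rintro q ⟨hqint, hqlat⟩
      have h1 : e q ∈ interior (e '' Δ) := by
        rw [← Homeomorph.image_interior]; exact mem_image_of_mem _ hqint
      have hstr : e '' Δ ⊆ Prod.snd ⁻¹' Icc (0 : ℝ) (s : ℝ) := by
        rintro _ ⟨x, hx, rfl⟩
        rw [he]
        simp only [mem_preimage, mem_Icc]
        exact hstrip x hx
      have h3 : e q ∈ interior (Prod.snd ⁻¹' Icc (0 : ℝ) (s : ℝ)) := interior_mono hstr h1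
      rw [← isOpenMap_snd.preimage_interior_eq_interior_preimage continuous_snd,
        interior_Icc, he] at h3
      obtain ⟨r, hr⟩ := zaffine_lattice hφZ hqlat
      rw [hr] at h3
      simp only [mem_preimage, mem_Ioo, toR2] at h3
      simp only [mem_preimage]
      rw [hr]
      have hb1 : (0 : ℤ) < r.2 := by exact_mod_cast h3.1
      have hb2 : r.2 < s := by exact_mod_cast h3.2
      simp only [mem_preimage, mem_Icc, toR2]
      constructor
      · exact_mod_cast (by omega : (1 : ℤ) ≤ r.2)
      · exact_mod_cast (by omega : r.2 ≤ 2)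
    have hull_sub : interiorPoly Δ ⊆ φ ⁻¹' (Prod.snd ⁻¹' Icc (1 : ℝ) 2) :=
      convexHull_min hAsub (zaffine_preimage_strip_convex hφZ 1 2)
    have h4 : e p ∈ interior (e '' interiorPoly Δ) := by
      rw [← Homeomorph.image_interior]; exact mem_image_of_mem _ hpint
    have h5 : e '' interiorPoly Δ ⊆ Prod.snd ⁻¹' Icc (1 : ℝ) 2 := by
      rw [he, image_subset_iff]; exact hull_sub
    have h6 : e p ∈ interior (Prod.snd ⁻¹' Icc (1 : ℝ) 2) := interior_mono h5 h4
    rw [← isOpenMap_snd.preimage_interior_eq_interior_preimage continuous_snd,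
      interior_Icc, he] at h6
    obtain ⟨r, hr⟩ := zaffine_lattice hφZ hplat
    rw [hr] at h6
    simp only [mem_preimage, mem_Ioo, toR2] at h6
    have hb1 : (1 : ℤ) < r.2 := by exact_mod_cast h6.1
    have hb2 : r.2 < 2 := by exact_mod_cast h6.2
    omega
  rw [latticeWidth, if_neg hΔne]
  exact le_csInf hWne hlb
end

section
/- Let r ≥ 1 and let Γ_r be the metric graph on vertices v₁,…,v_r where v_{i−1} and v_i are joined by exactly i edges of length 1 (for i = 2,…,r) and there are no other edges. Then the divisor v₁ + v₂ + ⋯ + v_r on Γ_r has rank at least 1. -/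
open Set

/-- A function g : ℝ → ℝ is piecewise linear with integer slopes on [0,1]. -/
def IsPLZ (g : ℝ → ℝ) : Prop :=
  ∃ (n : ℕ) (t : Fin (n + 1) → ℝ), t 0 = 0 ∧ t (Fin.last n) = 1 ∧ Monotone t ∧
    ∀ i : Fin n, ∃ m : ℤ, ∀ x ∈ Set.Icc (t i.castSucc) (t i.succ),
      g x = g (t i.castSucc) + (m : ℝ) * (x - t i.castSucc)

open Classical in
/-- The right-hand slope of g at a (when it is a well-defined integer). -/
noncomputable def rightSlope (g : ℝ → ℝ) (a : ℝ) : ℤ :=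
  if h : ∃ m : ℤ, ∃ δ > (0:ℝ), ∀ x ∈ Set.Icc a (a + δ), g x = g a + (m : ℝ) * (x - a)
  then h.choose else 0

open Classical in
/-- The left-hand slope of g at a (when it is a well-defined integer). -/
noncomputable def leftSlope (g : ℝ → ℝ) (a : ℝ) : ℤ :=
  if h : ∃ m : ℤ, ∃ δ > (0:ℝ), ∀ x ∈ Set.Icc (a - δ) a, g x = g a + (m : ℝ) * (x - a)
  then h.choose else 0

/-- A (loopless) multigraph: each edge e is a segment from `src e` to `tgt e`,
identified with the unit interval [0,1]. -/
structure MultiGraph where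
  V : Type
  E : Type
  src : E → V
  tgt : E → V

namespace MultiGraph

variable (G : MultiGraph)

/-- The points of the associated metric graph: the vertices together with the interior
points of the edges. -/
def Pt : Type := G.V ⊕ (G.E × {t : ℝ // 0 < t ∧ t < 1})

/-- A rational function on the metric graph: continuous, piecewise linear with integer
slopes on every edge. -/
structure RatFn where
  vertexVal : G.V → ℝ
  edgeVal : G.E → ℝ → ℝ
  pl : ∀ e, IsPLZ (edgeVal e)
  src_eq : ∀ e, edgeVal e 0 = vertexVal (G.src e)
  tgt_eq : ∀ e, edgeVal e 1 = vertexVal (G.tgt e)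

open Classical in
/-- ord_p(φ): the sum of the incoming slopes of φ at the point p. -/
noncomputable def ordAt [Fintype G.E] (φ : G.RatFn) : G.Pt → ℤ
  | Sum.inl v =>
      ∑ e : G.E, ((if G.src e = v then -(rightSlope (φ.edgeVal e) 0) else 0) +
                  (if G.tgt e = v then leftSlope (φ.edgeVal e) 1 else 0))
  | Sum.inr p => leftSlope (φ.edgeVal p.1) p.2.1 - rightSlope (φ.edgeVal p.1) p.2.1

/-- Divisors on the metric graph. -/
abbrev Div : Type := G.Pt →₀ ℤ

/-- The degree of a divisor. -/
noncomputable def degDiv (D : G.Div) : ℤ := Finsupp.sum D (fun _ n => n)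

/-- Effective divisors. -/
def Effective (D : G.Div) : Prop := ∀ p : G.Pt, 0 ≤ D p

/-- Linear equivalence of divisors: D' − D is the divisor of a rational function. -/
noncomputable def LinEquiv [Fintype G.E] (D D' : G.Div) : Prop :=
  ∃ φ : G.RatFn, ∀ p : G.Pt, D' p = D p + G.ordAt φ p

/-- D has rank at least one: for every point P, |D − P| ≠ ∅. -/
noncomputable def RankGE1 [Fintype G.E] (D : G.Div) : Prop :=
  ∀ p : G.Pt, ∃ D' : G.Div, G.Effective D' ∧
    G.LinEquiv (D - Finsupp.single p 1) D'

end MultiGraph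

/-- The graph G_r: vertices v_0, …, v_{r-1}, with exactly k+1 parallel edges between
v_{k-1} and v_k for k = 1, …, r−1 (i.e., with 1-based indexing, i edges between
v_{i−1} and v_i for i = 2, …, r). -/
def Gr (r : ℕ) : MultiGraph where
  V := Fin r
  E := {q : Σ i : Fin r, Fin (i.1 + 1) // 0 < q.1.1}
  src q := ⟨q.1.1.1 - 1, lt_of_le_of_lt (Nat.sub_le _ _) q.1.1.isLt⟩
  tgt q := q.1.1

instance (r : ℕ) : Fintype (Gr r).E :=
  inferInstanceAs (Fintype {q : Σ i : Fin r, Fin (i.1 + 1) // 0 < q.1.1})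

/-- The divisor v_1 + v_2 + ⋯ + v_r on Γ_r. -/
noncomputable def allVertices (r : ℕ) : (Gr r).Div :=
  ∑ v : Fin r, Finsupp.single (Sum.inl v : (Gr r).Pt) 1

/-!
If `P` is a vertex, `D − P` is already effective. If `P` lies on an edge `e` at distance `t`
from its source, take the rational function supported on `e` with slopes `1, 0, −1` and corners
at `c = min t (1 − t)` and `1 − c`: its divisor moves one chip from each end of `e` to the two
corners, one of which is `P`. Since `e` is not a loop, its two ends are distinct vertices, and
each carries a chip of `D`.
-/

lemma rightSlope_eq {g : ℝ → ℝ} {a δ : ℝ} {m : ℤ} (hδ : 0 < δ)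
    (h : ∀ x ∈ Icc a (a + δ), g x = g a + m * (x - a)) : rightSlope g a = m := by
  have hex : ∃ m : ℤ, ∃ δ > (0 : ℝ), ∀ x ∈ Icc a (a + δ), g x = g a + m * (x - a) :=
    ⟨m, δ, hδ, h⟩
  rw [rightSlope, dif_pos hex]
  obtain ⟨δ', hδ', h'⟩ := hex.choose_spec
  have hε : 0 < min δ δ' := lt_min hδ hδ'
  have h₁ := h (a + min δ δ') ⟨by linarith, by linarith [min_le_left δ δ']⟩
  have h₂ := h' (a + min δ δ') ⟨by linarith, by linarith [min_le_right δ δ']⟩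
  have : (hex.choose : ℝ) * min δ δ' = m * min δ δ' := by linarith
  exact_mod_cast mul_right_cancel₀ hε.ne' this

lemma leftSlope_eq {g : ℝ → ℝ} {a δ : ℝ} {m : ℤ} (hδ : 0 < δ)
    (h : ∀ x ∈ Icc (a - δ) a, g x = g a + m * (x - a)) : leftSlope g a = m := by
  have hex : ∃ m : ℤ, ∃ δ > (0 : ℝ), ∀ x ∈ Icc (a - δ) a, g x = g a + m * (x - a) :=
    ⟨m, δ, hδ, h⟩
  rw [leftSlope, dif_pos hex]
  obtain ⟨δ', hδ', h'⟩ := hex.choose_spec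
  have hε : 0 < min δ δ' := lt_min hδ hδ'
  have h₁ := h (a - min δ δ') ⟨by linarith [min_le_left δ δ'], by linarith⟩
  have h₂ := h' (a - min δ δ') ⟨by linarith [min_le_right δ δ'], by linarith⟩
  have : (hex.choose : ℝ) * min δ δ' = m * min δ δ' := by linarith
  exact_mod_cast mul_right_cancel₀ hε.ne' this

lemma rightSlope_eq_of_affineOn {g : ℝ → ℝ} {a b : ℝ} {m : ℤ}
    (h : ∀ x ∈ Icc a b, g x = g a + m * (x - a)) {s : ℝ} (hs : s ∈ Ico a b) :
    rightSlope g s = m :=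
  rightSlope_eq (δ := b - s) (by linarith [hs.2]) fun x hx => by
    rw [h x ⟨by linarith [hs.1, hx.1], by linarith [hx.2]⟩, h s (Ico_subset_Icc_self hs)]
    ring

lemma leftSlope_eq_of_affineOn {g : ℝ → ℝ} {a b : ℝ} {m : ℤ}
    (h : ∀ x ∈ Icc a b, g x = g a + m * (x - a)) {s : ℝ} (hs : s ∈ Ioc a b) :
    leftSlope g s = m :=
  leftSlope_eq (δ := s - a) (by linarith [hs.1]) fun x hx => by
    rw [h x ⟨by linarith [hx.1], by linarith [hs.2, hx.2]⟩, h s (Ioc_subset_Icc_self hs)]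
    ring

lemma rightSlope_const (b a : ℝ) : rightSlope (fun _ => b) a = 0 :=
  rightSlope_eq one_pos fun _ _ => by simp

lemma leftSlope_const (b a : ℝ) : leftSlope (fun _ => b) a = 0 :=
  leftSlope_eq one_pos fun _ _ => by simp

lemma isPLZ_const (b : ℝ) : IsPLZ fun _ => b :=
  ⟨1, ![0, 1], rfl, rfl, Fin.monotone_iff_le_succ.2 fun i => by fin_cases i; norm_num,
    fun _ => ⟨0, fun _ _ => by simp⟩⟩

noncomputable def trapezoid (c x : ℝ) : ℝ := min (min x (1 - x)) c

section Trapezoid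

variable {c : ℝ}

lemma trapezoid_affineOn_left (hc : c ≤ 1 - c) :
    ∀ x ∈ Icc 0 c, trapezoid c x = trapezoid c 0 + ((1 : ℤ) : ℝ) * (x - 0) := by
  rintro x ⟨hx₀, hx⟩
  simp only [trapezoid, min_def]
  split_ifs <;> push_cast <;> linarith

lemma trapezoid_affineOn_mid :
    ∀ x ∈ Icc c (1 - c), trapezoid c x = trapezoid c c + ((0 : ℤ) : ℝ) * (x - c) := by
  rintro x ⟨hx₀, hx⟩
  simp only [trapezoid, min_def]
  split_ifs <;> push_cast <;> linarith

lemma trapezoid_affineOn_right (hc : c ≤ 1 - c) :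
    ∀ x ∈ Icc (1 - c) 1,
      trapezoid c x = trapezoid c (1 - c) + ((-1 : ℤ) : ℝ) * (x - (1 - c)) := by
  rintro x ⟨hx₀, hx⟩
  simp only [trapezoid, min_def]
  split_ifs <;> push_cast <;> linarith

lemma trapezoid_zero (hc : 0 ≤ c) : trapezoid c 0 = 0 := by
  simp [trapezoid, hc]

lemma trapezoid_one (hc : 0 ≤ c) : trapezoid c 1 = 0 := by
  simp [trapezoid, hc]

lemma isPLZ_trapezoid (hc₀ : 0 ≤ c) (hc : c ≤ 1 - c) : IsPLZ (trapezoid c) := by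
  refine ⟨3, ![0, c, 1 - c, 1], rfl, rfl, Fin.monotone_iff_le_succ.2 fun i => ?_, fun i => ?_⟩
  · fin_cases i <;> simp <;> linarith
  · fin_cases i
    exacts [⟨1, trapezoid_affineOn_left hc⟩, ⟨0, trapezoid_affineOn_mid⟩,
      ⟨-1, trapezoid_affineOn_right hc⟩]

lemma rightSlope_trapezoid (hc : c ≤ 1 - c) {s : ℝ} (hs : s ∈ Ico 0 1) :
    rightSlope (trapezoid c) s = if s < c then 1 else if s < 1 - c then 0 else -1 := by
  split_ifs with h₁ h₂
  · exact rightSlope_eq_of_affineOn (trapezoid_affineOn_left hc) ⟨hs.1, h₁⟩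
  · exact rightSlope_eq_of_affineOn trapezoid_affineOn_mid ⟨not_lt.1 h₁, h₂⟩
  · exact rightSlope_eq_of_affineOn (trapezoid_affineOn_right hc) ⟨not_lt.1 h₂, hs.2⟩

lemma leftSlope_trapezoid (hc : c ≤ 1 - c) {s : ℝ} (hs : s ∈ Ioc 0 1) :
    leftSlope (trapezoid c) s = if s ≤ c then 1 else if s ≤ 1 - c then 0 else -1 := by
  split_ifs with h₁ h₂
  · exact leftSlope_eq_of_affineOn (trapezoid_affineOn_left hc) ⟨hs.1, h₁⟩
  · exact leftSlope_eq_of_affineOn trapezoid_affineOn_mid ⟨not_le.1 h₁, h₂⟩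
  · exact leftSlope_eq_of_affineOn (trapezoid_affineOn_right hc) ⟨not_le.1 h₂, hs.2⟩

lemma rightSlope_trapezoid_zero (hc₀ : 0 < c) (hc : c ≤ 1 - c) :
    rightSlope (trapezoid c) 0 = 1 :=
  rightSlope_eq_of_affineOn (trapezoid_affineOn_left hc) ⟨le_rfl, hc₀⟩

lemma leftSlope_trapezoid_one (hc₀ : 0 < c) (hc : c ≤ 1 - c) :
    leftSlope (trapezoid c) 1 = -1 :=
  leftSlope_eq_of_affineOn (trapezoid_affineOn_right hc) ⟨by linarith, le_rfl⟩

lemma leftSlope_sub_rightSlope_trapezoid (hc : c ≤ 1 - c) {s : ℝ} (hs : s ∈ Ioo 0 1) :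
    leftSlope (trapezoid c) s - rightSlope (trapezoid c) s =
      (if c = s then 1 else 0) + (if 1 - c = s then 1 else 0) := by
  rw [leftSlope_trapezoid hc (Ioo_subset_Ioc_self hs),
    rightSlope_trapezoid hc (Ioo_subset_Ico_self hs)]
  split_ifs <;> grind

end Trapezoid

namespace MultiGraph

variable {G : MultiGraph}

def Loopless (G : MultiGraph) : Prop := ∀ e, G.src e ≠ G.tgt e

def vertex (G : MultiGraph) (v : G.V) : G.Pt := Sum.inl v

/-- The point of the edge `e` at distance `t` from `G.src e`. -/
def edgePoint (G : MultiGraph) (e : G.E) (t : {t : ℝ // 0 < t ∧ t < 1}) : G.Pt :=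
  Sum.inr (e, t)

@[simp] lemma vertex_inj {v w : G.V} : G.vertex v = G.vertex w ↔ v = w :=
  Sum.inl_injective.eq_iff

@[simp] lemma edgePoint_inj {e e' : G.E} {s t : {t : ℝ // 0 < t ∧ t < 1}} :
    G.edgePoint e s = G.edgePoint e' t ↔ e = e' ∧ s = t :=
  Sum.inr_injective.eq_iff.trans Prod.ext_iff

@[simp] lemma vertex_ne_edgePoint (v : G.V) (e : G.E) (t : {t : ℝ // 0 < t ∧ t < 1}) :
    G.vertex v ≠ G.edgePoint e t := Sum.inl_ne_inr

@[simp] lemma edgePoint_ne_vertex (v : G.V) (e : G.E) (t : {t : ℝ // 0 < t ∧ t < 1}) :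
    G.edgePoint e t ≠ G.vertex v := Sum.inr_ne_inl

@[elab_as_elim]
lemma Pt.induction {motive : G.Pt → Prop} (vertex : ∀ v, motive (G.vertex v))
    (edgePoint : ∀ e t, motive (G.edgePoint e t)) (q : G.Pt) : motive q := by
  rcases q with v | ⟨e, t⟩
  exacts [vertex v, edgePoint e t]

noncomputable def RatFn.zero (G : MultiGraph) : G.RatFn where
  vertexVal _ := 0
  edgeVal _ _ := 0
  pl _ := isPLZ_const 0
  src_eq _ := rfl
  tgt_eq _ := rfl

open Classical in
noncomputable def RatFn.onEdge (e₀ : G.E) (g : ℝ → ℝ) (hg : IsPLZ g) (h₀ : g 0 = 0)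
    (h₁ : g 1 = 0) : G.RatFn where
  vertexVal _ := 0
  edgeVal e := if e = e₀ then g else fun _ => 0
  pl e := by split_ifs; exacts [hg, isPLZ_const 0]
  src_eq e := by split_ifs; exacts [h₀, rfl]
  tgt_eq e := by split_ifs; exacts [h₁, rfl]

variable [Fintype G.E]

lemma ordAt_zero (q : G.Pt) : G.ordAt (RatFn.zero G) q = 0 := by
  rcases q with v | ⟨e, s⟩ <;> simp [ordAt, RatFn.zero, rightSlope_const, leftSlope_const]

lemma LinEquiv.refl (D : G.Div) : G.LinEquiv D D :=
  ⟨RatFn.zero G, fun q => by rw [ordAt_zero, add_zero]⟩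

open Classical in
lemma ordAt_onEdge_vertex (e₀ : G.E) {g : ℝ → ℝ} (hg : IsPLZ g) (h₀ : g 0 = 0)
    (h₁ : g 1 = 0) (v : G.V) :
    G.ordAt (RatFn.onEdge e₀ g hg h₀ h₁) (G.vertex v) =
      (if G.src e₀ = v then -rightSlope g 0 else 0) +
        (if G.tgt e₀ = v then leftSlope g 1 else 0) := by
  rw [vertex, ordAt, Finset.sum_eq_single e₀ (fun e _ he => by
    simp [RatFn.onEdge, he, rightSlope_const, leftSlope_const]) (by simp)]
  simp [RatFn.onEdge]

open Classical in
lemma ordAt_onEdge_edgePoint (e₀ : G.E) {g : ℝ → ℝ} (hg : IsPLZ g) (h₀ : g 0 = 0)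
    (h₁ : g 1 = 0) (e : G.E) (s : {t : ℝ // 0 < t ∧ t < 1}) :
    G.ordAt (RatFn.onEdge e₀ g hg h₀ h₁) (G.edgePoint e s) =
      if e = e₀ then leftSlope g s - rightSlope g s else 0 := by
  by_cases he : e = e₀ <;>
    simp [edgePoint, ordAt, RatFn.onEdge, he, rightSlope_const, leftSlope_const]

open Finsupp in
/-- The witness is the trapezoid on `e` with corners at distance `c` from the ends of `e`. -/
lemma linEquiv_trapezoid (D : G.Div) (e : G.E) {c : ℝ} (hc₀ : 0 < c) (hc : c ≤ 1 - c) :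
    G.LinEquiv D (D + single (G.edgePoint e ⟨c, hc₀, by linarith⟩) 1
      + single (G.edgePoint e ⟨1 - c, by linarith, by linarith⟩) 1
      - single (G.vertex (G.src e)) 1 - single (G.vertex (G.tgt e)) 1) := by
  classical
  refine ⟨RatFn.onEdge e (trapezoid c) (isPLZ_trapezoid hc₀.le hc) (trapezoid_zero hc₀.le)
    (trapezoid_one hc₀.le), fun q => ?_⟩
  induction q using Pt.induction with
  | vertex v =>
    rw [ordAt_onEdge_vertex, rightSlope_trapezoid_zero hc₀ hc, leftSlope_trapezoid_one hc₀ hc]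
    simp only [Finsupp.sub_apply, Finsupp.add_apply, single_apply, vertex_inj,
      edgePoint_ne_vertex, if_false]
    split_ifs <;> ring
  | edgePoint e' s =>
    rw [ordAt_onEdge_edgePoint]
    simp only [Finsupp.sub_apply, Finsupp.add_apply, single_apply, edgePoint_inj,
      vertex_ne_edgePoint, if_false, Subtype.ext_iff]
    by_cases he : e' = e
    · subst he
      simp only [true_and, if_true]
      rw [leftSlope_sub_rightSlope_trapezoid hc s.2]
      ring
    · simp [he, Ne.symm he]

open Finsupp in
theorem rankGE1_of_one_le_vertex (hG : G.Loopless) {D : G.Div} (hD : G.Effective D)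
    (hV : ∀ v, 1 ≤ D (G.vertex v)) : G.RankGE1 D := by
  classical
  intro p
  induction p using Pt.induction with
  | vertex v =>
    refine ⟨_, fun q => ?_, LinEquiv.refl _⟩
    induction q using Pt.induction with
    | vertex w =>
      simp only [Finsupp.sub_apply, single_apply, vertex_inj]
      split_ifs <;> linarith [hV w]
    | edgePoint e s => simpa [single_apply] using hD _
  | edgePoint e t =>
    obtain ⟨t, ht₀, ht₁⟩ := t
    have hc₀ : 0 < min t (1 - t) := lt_min ht₀ (by linarith)
    have hc : min t (1 - t) ≤ 1 - min t (1 - t) := by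
      linarith [min_le_left t (1 - t), min_le_right t (1 - t)]
    refine ⟨_, fun q => ?_, linEquiv_trapezoid _ e hc₀ hc⟩
    induction q using Pt.induction with
    | vertex w =>
      simp only [Finsupp.sub_apply, Finsupp.add_apply, single_apply, vertex_inj,
        edgePoint_ne_vertex, if_false]
      split_ifs with h₁ h₂
      · exact absurd (h₁.trans h₂.symm) (hG e)
      all_goals linarith [hV w]
    | edgePoint e' s =>
      simp only [Finsupp.sub_apply, Finsupp.add_apply, single_apply, edgePoint_inj,
        vertex_ne_edgePoint, if_false, Subtype.ext_iff]
      have hDs := hD (G.edgePoint e' s)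
      -- `t` is one of the two corners, so the chip removed at `t` is paid back there.
      rcases min_choice t (1 - t) with h | h <;> rw [h] <;> split_ifs <;> grind

end MultiGraph

lemma Gr_loopless (r : ℕ) : (Gr r).Loopless := fun e h => by
  have := congrArg Fin.val h
  have := e.2
  simp only [Gr] at *
  omega

lemma allVertices_eq (r : ℕ) :
    allVertices r = ∑ v : Fin r, Finsupp.single ((Gr r).vertex v) 1 :=
  rfl

lemma allVertices_apply_vertex (r : ℕ) (v : Fin r) : allVertices r ((Gr r).vertex v) = 1 := by
  classical
  rw [allVertices_eq, Finsupp.finsetSum_apply, Finset.sum_eq_single v (fun w _ hw => by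
    rw [Finsupp.single_apply]; exact if_neg (MultiGraph.vertex_inj.not.2 hw)) (by simp)]
  simp

lemma effective_allVertices (r : ℕ) : (Gr r).Effective (allVertices r) := fun q => by
  classical
  rw [allVertices_eq, Finsupp.finsetSum_apply]
  exact Finset.sum_nonneg fun v _ => Finsupp.single_nonneg.2 zero_le_one q

theorem allVertices_rank_ge_one_general (r : ℕ) :
    (Gr r).RankGE1 (allVertices r) :=
  (Gr r).rankGE1_of_one_le_vertex (Gr_loopless r) (effective_allVertices r)
    fun v => (allVertices_apply_vertex r v).ge

/-- For r ≥ 1, the divisor v₁ + v₂ + ⋯ + v_r on the metric graph Γ_r has rank at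
least 1. -/
theorem allVertices_rank_ge_one (r : ℕ) (hr : 1 ≤ r) :
    (Gr r).RankGE1 (allVertices r) :=
  allVertices_rank_ge_one_general r
end

section
/- Let Δ be the convex hull of {(0,0)} together with the graph C of a concave, continuous, piecewise-linear function f: [0,b] → ℝ₊ with f(0) = a ≥ f(1), f(b) = 0, whose segments have lattice-point endpoints, where 1 ≤ a ≤ b. If Δ ≠ aΣ, then lw(Δ) = a. -/
open Set

/-!
The bound `f ≤ a` puts `Δ` in the strip `0 ≤ y ≤ a`: on the first segment `[0, x₁]` (with
`x₁ ≥ 1` a lattice abscissa) `f` is affine with `f 1 ≤ f 0 = a`, so it does not increase there,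
and concavity keeps it below `f 1` beyond `1`. Conversely `Δ` contains the two legs of `a • Σ`;
the second row of the linear part of a `ℤ`-affine map has a nonzero integer entry, so the image
of one of the legs already has vertical extent at least `a`.
-/

theorem IsZAffine.exists_snd_eq {φ : ℝ × ℝ → ℝ × ℝ} (hφ : IsZAffine φ) :
    ∃ c d : ℤ, (c ≠ 0 ∨ d ≠ 0) ∧ ∃ e : ℝ, ∀ p, (φ p).2 = c * p.1 + d * p.2 + e := by
  obtain ⟨A, B, c, d, E, e, hdet, hφ⟩ := hφ
  refine ⟨c, d, ?_, e, fun p => by rw [hφ]⟩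
  by_contra! h
  rw [h.1, h.2] at hdet
  omega

theorem le_abs_intCast_mul {c : ℤ} (hc : c ≠ 0) {a : ℝ} (ha : 0 ≤ a) : a ≤ |c * a| := by
  have hc' : (1 : ℝ) ≤ |(c : ℝ)| := by exact_mod_cast Int.one_le_abs hc
  rw [abs_mul, abs_of_nonneg ha]
  nlinarith

theorem le_of_widthLE_of_mem {Δ : Set (ℝ × ℝ)} {a : ℝ} {s : ℤ} (ha : 0 ≤ a)
    (h₀ : ((0 : ℝ), (0 : ℝ)) ∈ Δ) (h₁ : (a, (0 : ℝ)) ∈ Δ) (h₂ : ((0 : ℝ), a) ∈ Δ)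
    (hw : widthLE Δ s) : a ≤ s := by
  obtain ⟨φ, hφ, hbd⟩ := hw
  obtain ⟨c, d, hcd, e, he⟩ := hφ.exists_snd_eq
  have hdiff : ∀ p ∈ Δ, ∀ q ∈ Δ, |(φ p).2 - (φ q).2| ≤ s := fun p hp q hq =>
    abs_sub_le_of_nonneg_of_le (hbd p hp).1 (hbd p hp).2 (hbd q hq).1 (hbd q hq).2
  rcases hcd with hc | hd
  · calc a ≤ |c * a| := le_abs_intCast_mul hc ha
      _ = |(φ (a, 0)).2 - (φ (0, 0)).2| := by simp only [he]; ring_nf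
      _ ≤ s := hdiff _ h₁ _ h₀
  · calc a ≤ |d * a| := le_abs_intCast_mul hd ha
      _ = |(φ (0, a)).2 - (φ (0, 0)).2| := by simp only [he]; ring_nf
      _ ≤ s := hdiff _ h₂ _ h₀

theorem widthLE_of_subset_strip {Δ : Set (ℝ × ℝ)} {s : ℤ}
    (h : Δ ⊆ univ ×ˢ Icc 0 (s : ℝ)) : widthLE Δ s :=
  ⟨id, ⟨1, 0, 0, 1, 0, 0, by norm_num, by simp⟩, fun _ hp => (h hp).2⟩

theorem latticeWidth_eq_of_isLeast {Δ : Set (ℝ × ℝ)} {a : ℤ} (hΔ : Δ.Nonempty) (ha : 0 ≤ a)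
    (hw : widthLE Δ a) (hmin : ∀ s, widthLE Δ s → a ≤ s) : latticeWidth Δ = a := by
  rw [latticeWidth, if_neg hΔ.ne_empty]
  exact IsLeast.csInf_eq ⟨⟨ha, hw⟩, fun s hs => hmin s hs.2⟩

theorem Convex.mk_zero_mem_of_le {Δ : Set (ℝ × ℝ)} (hΔ : Convex ℝ Δ) {a b : ℝ} (ha : 0 ≤ a)
    (hab : a ≤ b) (h₀ : ((0 : ℝ), (0 : ℝ)) ∈ Δ) (hb : (b, (0 : ℝ)) ∈ Δ) : (a, (0 : ℝ)) ∈ Δ := by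
  rcases ha.eq_or_lt with rfl | ha
  · exact h₀
  have hb₀ : 0 < b := ha.trans_le hab
  convert hΔ.smul_mem_of_zero_mem h₀ hb ⟨by positivity, div_le_one_of_le₀ hab hb₀.le⟩ using 1
  ext <;> simp [div_mul_cancel₀ _ hb₀.ne']

theorem ConcaveOn.le_of_affine_near_zero {f : ℝ → ℝ} {a b m x₁ : ℝ}
    (hconc : ConcaveOn ℝ (Icc 0 b) f) (hx₁ : 1 ≤ x₁) (hlin : ∀ t ∈ Icc 0 x₁, f t = a + m * t)
    (hf1 : f 1 ≤ a) : ∀ t ∈ Icc 0 b, f t ≤ a := by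
  have hm : m ≤ 0 := by linarith [hlin 1 ⟨zero_le_one, hx₁⟩]
  intro t ht
  rcases le_or_gt t 1 with ht1 | ht1
  · rw [hlin t ⟨ht.1, ht1.trans hx₁⟩]
    nlinarith [ht.1]
  · have hf0 : f 0 = a := by simpa using hlin 0 ⟨le_rfl, zero_le_one.trans hx₁⟩
    have hb : (0 : ℝ) ∈ Icc 0 b := ⟨le_rfl, ht.1.trans ht.2⟩
    exact (hconc.right_le_of_le_left'' hb ht zero_lt_one ht1.le (hf0 ▸ hf1)).trans hf1

theorem convexHull_insert_zero_graph_subset_strip {f : ℝ → ℝ} {b s : ℝ} (hs : 0 ≤ s)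
    (hf : ∀ t ∈ Icc 0 b, f t ∈ Icc 0 s) :
    convexHull ℝ (insert ((0 : ℝ), (0 : ℝ)) {p : ℝ × ℝ | ∃ t ∈ Icc 0 b, p = (t, f t)}) ⊆
      univ ×ˢ Icc 0 s := by
  refine convexHull_min (insert_subset_iff.2 ⟨⟨trivial, le_rfl, hs⟩, ?_⟩)
    (convex_univ.prod (convex_Icc 0 s))
  rintro _ ⟨t, ht, rfl⟩
  exact ⟨trivial, hf t ht⟩

theorem lw_of_concave_graph_polygon_general (a b : ℤ) (ha : 1 ≤ a) (hab : a ≤ b)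
    (f : ℝ → ℝ) (n : ℕ) (x y : Fin (n + 1) → ℤ)
    (hx0 : x 0 = 0) (hxn : x (Fin.last n) = b)
    (hxmono : StrictMono x)
    (hy0 : y 0 = a) (hyn : y (Fin.last n) = 0)
    (hval : ∀ i, f ((x i : ℝ)) = (y i : ℝ))
    (hlin : ∀ i : Fin n, ∀ t ∈ Set.Icc ((x i.castSucc : ℝ)) ((x i.succ : ℝ)),
      f t = (y i.castSucc : ℝ) +
        ((y i.succ : ℝ) - (y i.castSucc : ℝ)) / ((x i.succ : ℝ) - (x i.castSucc : ℝ)) *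
          (t - (x i.castSucc : ℝ)))
    (hconc : ConcaveOn ℝ (Set.Icc (0 : ℝ) (b : ℝ)) f)
    (hpos : ∀ t ∈ Set.Icc (0 : ℝ) (b : ℝ), 0 ≤ f t)
    (hf1 : f 1 ≤ (a : ℝ))
    (Δ : Set (ℝ × ℝ))
    (hΔ : Δ = convexHull ℝ
      (insert ((0:ℝ), (0:ℝ)) {p : ℝ × ℝ | ∃ t ∈ Set.Icc (0 : ℝ) (b : ℝ), p = (t, f t)})) :
    latticeWidth Δ = a := by
  obtain ⟨m, rfl⟩ : ∃ m, n = m + 1 := Nat.exists_eq_succ_of_ne_zero <| by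
    rintro rfl
    have : x 0 = b := hxn
    omega
  have hbR : (0 : ℝ) < b := by exact_mod_cast (by omega : (0 : ℤ) < b)
  have hx₁ : (1 : ℝ) ≤ x 1 := by
    have := hxmono (show (0 : Fin (m + 2)) < 1 from Fin.zero_lt_one)
    exact_mod_cast hx0 ▸ this
  have hf0 : f 0 = a := by simpa [hx0, hy0] using hval 0
  have hfb : f b = 0 := by simpa [hxn, hyn] using hval (Fin.last _)
  have hfle : ∀ t ∈ Icc 0 (b : ℝ), f t ≤ a := by
    refine hconc.le_of_affine_near_zero hx₁ (m := (y 1 - a) / x 1) (fun t ht => ?_) hf1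
    simpa [hx0, hy0] using hlin 0 t (by simpa [hx0] using ht)
  have mem_graph : ∀ t ∈ Icc 0 (b : ℝ), (t, f t) ∈ Δ := fun t ht =>
    hΔ ▸ subset_convexHull ℝ _ (mem_insert_of_mem _ ⟨t, ht, rfl⟩)
  have h₀ : ((0 : ℝ), (0 : ℝ)) ∈ Δ := hΔ ▸ subset_convexHull ℝ _ (mem_insert _ _)
  have h₁ : ((a : ℝ), (0 : ℝ)) ∈ Δ :=
    (hΔ ▸ convex_convexHull ℝ _ : Convex ℝ Δ).mk_zero_mem_of_le (by positivity)
      (by exact_mod_cast hab) h₀ (hfb ▸ mem_graph b ⟨hbR.le, le_rfl⟩)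
  have h₂ : ((0 : ℝ), (a : ℝ)) ∈ Δ := hf0 ▸ mem_graph 0 ⟨le_rfl, hbR.le⟩
  refine latticeWidth_eq_of_isLeast ⟨_, h₀⟩ (by omega) (widthLE_of_subset_strip ?_)
    fun s hs => by exact_mod_cast le_of_widthLE_of_mem (by positivity) h₀ h₁ h₂ hs
  exact hΔ ▸ convexHull_insert_zero_graph_subset_strip (by positivity)
    fun t ht => ⟨hpos t ht, hfle t ht⟩

/-- Let Δ be the convex hull of (0,0) together with the graph of a concave, continuous,
piecewise-linear function f : [0,b] → ℝ₊ with f(0) = a ≥ f(1), f(b) = 0, whose segments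
have lattice-point endpoints, where 1 ≤ a ≤ b.  If Δ ≠ aΣ then lw(Δ) = a. -/
theorem lw_of_concave_graph_polygon (a b : ℤ) (ha : 1 ≤ a) (hab : a ≤ b)
    (f : ℝ → ℝ) (n : ℕ) (x y : Fin (n + 1) → ℤ)
    (hx0 : x 0 = 0) (hxn : x (Fin.last n) = b)
    (hxmono : StrictMono x)
    (hy0 : y 0 = a) (hyn : y (Fin.last n) = 0)
    (hval : ∀ i, f ((x i : ℝ)) = (y i : ℝ))
    (hlin : ∀ i : Fin n, ∀ t ∈ Set.Icc ((x i.castSucc : ℝ)) ((x i.succ : ℝ)),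
      f t = (y i.castSucc : ℝ) +
        ((y i.succ : ℝ) - (y i.castSucc : ℝ)) / ((x i.succ : ℝ) - (x i.castSucc : ℝ)) *
          (t - (x i.castSucc : ℝ)))
    (hconc : ConcaveOn ℝ (Set.Icc (0 : ℝ) (b : ℝ)) f)
    (hpos : ∀ t ∈ Set.Icc (0 : ℝ) (b : ℝ), 0 ≤ f t)
    (hf1 : f 1 ≤ (a : ℝ))
    (Δ : Set (ℝ × ℝ))
    (hΔ : Δ = convexHull ℝ
      (insert ((0:ℝ), (0:ℝ)) {p : ℝ × ℝ | ∃ t ∈ Set.Icc (0 : ℝ) (b : ℝ), p = (t, f t)}))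
    (hne : Δ ≠ simplexPoly a) :
    latticeWidth Δ = a :=
  lw_of_concave_graph_polygon_general a b ha hab f n x y hx0 hxn hxmono hy0 hyn hval hlin hconc hpos
    hf1 Δ hΔ
end

section
/- For every two-dimensional lattice polygon Δ and integer d ≥ 0, if every edge of Δ contains at least d+1 lattice points, then lw(Δ) ≥ d. -/
open Set

/-- F is an edge of Δ : a one-dimensional exposed face. -/
def IsEdgeOf (Δ F : Set (ℝ × ℝ)) : Prop :=
  IsExposed ℝ Δ F ∧ ∃ p q : ℝ × ℝ, p ≠ q ∧ F = segment ℝ p q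

/-!
Let `ℓ` be the second coordinate of a unimodular affine map placing `Δ` in the strip
`0 ≤ y ≤ s`. It is integer-valued on lattice points and, as `Δ` is two-dimensional, not constant
on the vertices of `Δ`. Tilting the first coordinate `m` to `m + t ℓ` so that its maximum over the
vertices is attained at two vertices with different `ℓ`-values exposes an edge of `Δ` on which
`ℓ` is injective. The `d + 1` lattice points of that edge have distinct integer `ℓ`-values in
`[0, s]`, hence `d ≤ s`.
-/

lemma exists_tilt_maximized_twice {α : Type*} (S : Finset α) (ℓ m : α → ℝ)
    (hℓ : ∃ x ∈ S, ∃ y ∈ S, ℓ x ≠ ℓ y) :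
    ∃ t : ℝ, ∃ u ∈ S, ∃ w ∈ S, ℓ u ≠ ℓ w ∧
      (∀ p ∈ S, m p + t * ℓ p ≤ m u + t * ℓ u) ∧ m w + t * ℓ w = m u + t * ℓ u := by
  obtain ⟨x, hx, y, hy, hxy⟩ := hℓ
  -- `u` minimises `ℓ` and, among the minimisers, maximises `m`
  obtain ⟨u, hu, hu_max⟩ := S.exists_max_image (fun p => toLex (-ℓ p, m p)) ⟨x, hx⟩
  have hu_lex : ∀ p ∈ S, ℓ u < ℓ p ∨ ℓ p = ℓ u ∧ m p ≤ m u := fun p hp => by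
    simpa [Prod.Lex.toLex_le_toLex] using hu_max p hp
  set U := S.filter fun p => ℓ u < ℓ p
  have hU : U.Nonempty := by
    by_contra hU
    simp only [Finset.not_nonempty_iff_eq_empty, Finset.filter_eq_empty_iff, not_lt, U] at hU
    have := hu_lex x hx
    have := hu_lex y hy
    grind
  -- `-t` is the largest slope of `m` against `ℓ` as seen from `u`, attained at `w`
  obtain ⟨w, hwU, hw_max⟩ := U.exists_max_image (fun p => (m p - m u) / (ℓ p - ℓ u)) hU
  obtain ⟨hw, huw⟩ := Finset.mem_filter.1 hwU
  have hpos : 0 < ℓ w - ℓ u := sub_pos.2 huw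
  refine ⟨-((m w - m u) / (ℓ w - ℓ u)), u, hu, w, hw, huw.ne, fun p hp => ?_, ?_⟩
  · rcases hu_lex p hp with hup | ⟨hpu, hmp⟩
    · have := hw_max p (Finset.mem_filter.2 ⟨hp, hup⟩)
      rw [div_le_iff₀ (sub_pos.2 hup)] at this
      nlinarith
    · rw [hpu]; linarith
  · field_simp
    ring

theorem eq_segment_of_injOn {E : Type*} [TopologicalSpace E] [AddCommGroup E] [Module ℝ E]
    (ℓ : E →L[ℝ] ℝ) {F : Set E} (hF : IsCompact F) (hFc : Convex ℝ F) (hne : F.Nonempty)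
    (hinj : InjOn ℓ F) : ∃ p q, F = segment ℝ p q := by
  obtain ⟨p, hp, hp_min⟩ := hF.exists_isMinOn hne ℓ.continuous.continuousOn
  obtain ⟨q, hq, hq_max⟩ := hF.exists_isMaxOn hne ℓ.continuous.continuousOn
  refine ⟨p, q, Subset.antisymm (fun x hx => ?_) (hFc.segment_subset hp hq)⟩
  have : ℓ x ∈ ℓ.toLinearMap.toAffineMap '' segment ℝ p q := by
    rw [image_segment, segment_eq_uIcc]
    exact Icc_subset_uIcc ⟨hp_min hx, hq_max hx⟩
  obtain ⟨y, hy, hyx⟩ := this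
  rwa [hinj hx (hFc.segment_subset hp hq hy) hyx.symm]

theorem exists_apply_ne_of_affineSpan_eq_top {k V W : Type*} [Field k] [AddCommGroup V]
    [Module k V] [AddCommGroup W] [Module k W] {s : Set V} (hs : affineSpan k s = ⊤)
    {ℓ : V →ₗ[k] W} (hℓ : ℓ ≠ 0) : ∃ x ∈ s, ∃ y ∈ s, ℓ x ≠ ℓ y := by
  by_contra! hconst
  refine hℓ (LinearMap.ker_eq_top.1 (eq_top_iff.2 ?_))
  rw [← AffineSubspace.direction_top k V V, ← hs, direction_affineSpan, vectorSpan_def,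
    Submodule.span_le]
  rintro _ ⟨x, hx, y, hy, rfl⟩
  simp [hconst x hx y hy]

theorem ne_zero_of_injective_prod {m ℓ : ℝ × ℝ →L[ℝ] ℝ} (hml : Function.Injective (m.prod ℓ)) :
    ℓ ≠ 0 := by
  rintro rfl
  have hm : Function.Injective (m : ℝ × ℝ →ₗ[ℝ] ℝ) := fun x y hxy => hml (by simpa using hxy)
  simpa using LinearMap.finrank_le_finrank_of_injective hm

theorem exists_isEdgeOf_injOn (P : Finset (ℝ × ℝ)) (hP : affineSpan ℝ (P : Set (ℝ × ℝ)) = ⊤)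
    {m ℓ : ℝ × ℝ →L[ℝ] ℝ} (hml : Function.Injective (m.prod ℓ)) :
    ∃ F, IsEdgeOf (convexHull ℝ ↑P) F ∧ InjOn ℓ F := by
  obtain ⟨t, u, hu, w, hw, hℓuw, hu_max, hw_max⟩ := exists_tilt_maximized_twice P ℓ m
    (exists_apply_ne_of_affineSpan_eq_top hP (ℓ := ℓ.toLinearMap)
      (by exact_mod_cast ne_zero_of_injective_prod hml))
  set g : ℝ × ℝ →L[ℝ] ℝ := m + t • ℓ
  have hg : ∀ p, g p = m p + t * ℓ p := fun p => rfl
  set F := g.toExposed (convexHull ℝ ↑P)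
  have hg_le : ∀ y ∈ convexHull ℝ ↑P, g y ≤ g u :=
    convexHull_min (fun p hp => (hg p).trans_le ((hu_max p hp).trans_eq (hg u).symm))
      (convex_halfSpace_le g.toLinearMap.isLinear _)
  have huF : u ∈ F := ⟨subset_convexHull ℝ _ hu, hg_le⟩
  have hwF : w ∈ F := ⟨subset_convexHull ℝ _ hw, by rw [hg w, hw_max, ← hg]; exact hg_le⟩
  have hinj : InjOn ℓ F := by
    intro x hx y hy hxy
    have hgxy : g x = g y := le_antisymm (hy.2 x hx.1) (hx.2 y hy.1)
    rw [hg, hg, hxy, add_left_inj] at hgxy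
    exact hml (Prod.ext hgxy hxy)
  have hΔ : IsCompact (convexHull ℝ (P : Set (ℝ × ℝ))) :=
    P.finite_toSet.isCompact_convexHull (𝕜 := ℝ)
  obtain ⟨p, q, hpq⟩ := eq_segment_of_injOn ℓ
    (ContinuousLinearMap.toExposed.isExposed.isCompact hΔ)
    (ContinuousLinearMap.toExposed.isExposed.convex (convex_convexHull ℝ _)) ⟨u, huF⟩ hinj
  refine ⟨F, ⟨ContinuousLinearMap.toExposed.isExposed, p, q, ?_, hpq⟩, hinj⟩
  rintro rfl
  rw [segment_same] at hpq
  have hu' : u ∈ ({p} : Set (ℝ × ℝ)) := by rw [← hpq]; exact huF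
  have hw' : w ∈ ({p} : Set (ℝ × ℝ)) := by rw [← hpq]; exact hwF
  exact hℓuw (by rw [mem_singleton_iff.1 hu', mem_singleton_iff.1 hw'])

theorem card_le_of_injOn_of_mem_Icc_int {α : Type*} {T : Finset α} {f : α → ℝ} {s : ℤ}
    (hs : 0 ≤ s) (hint : ∀ p ∈ T, ∃ k : ℤ, f p = k) (hbd : ∀ p ∈ T, f p ∈ Icc 0 (s : ℝ))
    (hinj : InjOn f T) : (T.card : ℤ) ≤ s + 1 := by
  have hfloor : ∀ p ∈ T, (⌊f p⌋ : ℝ) = f p := fun p hp => by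
    obtain ⟨k, hk⟩ := hint p hp
    rw [hk, Int.floor_intCast]
  have hmaps : MapsTo (fun p => ⌊f p⌋) T (Finset.Icc 0 s) := fun p hp => by
    have := hbd p hp
    rw [← hfloor p hp] at this
    exact Finset.mem_Icc.2 ⟨by exact_mod_cast this.1, by exact_mod_cast this.2⟩
  have hinj' : InjOn (fun p => ⌊f p⌋) T := fun p hp q hq hpq =>
    hinj hp hq (by rw [← hfloor p hp, ← hfloor q hq]; exact congrArg _ hpq)
  calc (T.card : ℤ) ≤ (Finset.Icc 0 s).card := by
        exact_mod_cast Finset.card_le_card_of_injOn _ hmaps hinj'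
    _ = s + 1 := by rw [Int.card_Icc]; omega

theorem injective_prod_of_det_ne_zero {a b c d : ℝ} (h : a * d - b * c ≠ 0) :
    Function.Injective ((a • ContinuousLinearMap.fst ℝ ℝ ℝ + b • ContinuousLinearMap.snd ℝ ℝ ℝ).prod
      (c • ContinuousLinearMap.fst ℝ ℝ ℝ + d • ContinuousLinearMap.snd ℝ ℝ ℝ)) := by
  rw [injective_iff_map_eq_zero]
  rintro ⟨x, y⟩ hv
  simp only [ContinuousLinearMap.prod_apply, add_apply, smul_apply, ContinuousLinearMap.coe_fst',
    ContinuousLinearMap.coe_snd', smul_eq_mul, Prod.mk_eq_zero] at hv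
  obtain ⟨h1, h2⟩ := hv
  refine Prod.mk_eq_zero.2 ⟨mul_left_cancel₀ h ?_, mul_left_cancel₀ h ?_⟩
  · linear_combination d * h1 - b * h2
  · linear_combination a * h2 - c * h1

theorem exists_widthLE_of_isBounded {Δ : Set (ℝ × ℝ)} (hΔ : Bornology.IsBounded Δ) :
    ∃ s, 0 ≤ s ∧ widthLE Δ s := by
  obtain ⟨C, hC⟩ := hΔ.exists_norm_le
  refine ⟨2 * ⌈C⌉₊, by positivity, fun p => (p.1, p.2 + ⌈C⌉₊),
    ⟨1, 0, 0, 1, 0, ⌈C⌉₊, by norm_num, fun p => by simp⟩, fun p hp => ?_⟩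
  have := abs_le.1 (((norm_snd_le p).trans (hC p hp)).trans (Nat.le_ceil C))
  constructor <;> push_cast <;> linarith

theorem le_of_widthLE_of_long_edges (P : Finset (ℝ × ℝ)) (h2 : TwoDim (convexHull ℝ ↑P))
    {d s : ℤ} (hs : 0 ≤ s) (h : ∀ F, IsEdgeOf (convexHull ℝ ↑P) F → ∃ T : Finset (ℝ × ℝ),
      ↑T ⊆ F ∧ (∀ p ∈ T, isLatticePt p) ∧ d + 1 ≤ (T.card : ℤ))
    (hw : widthLE (convexHull ℝ ↑P) s) : d ≤ s := by
  obtain ⟨φ, ⟨a, b, c, d', e, f, hdet, hφ⟩, hbd⟩ := hw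
  have hdet' : ((a * d' - b * c : ℤ) : ℝ) ≠ 0 := by
    rcases hdet with h | h <;> simp [h]
  push_cast at hdet'
  obtain ⟨F, hF, hinj⟩ := exists_isEdgeOf_injOn P (by rwa [TwoDim, affineSpan_convexHull] at h2)
    (injective_prod_of_det_ne_zero hdet')
  obtain ⟨T, hTF, hTlat, hT⟩ := h F hF
  have hint : ∀ p ∈ T, ∃ k : ℤ, (φ p).2 = k := fun p hp => by
    obtain ⟨q, rfl⟩ := hTlat p hp
    exact ⟨c * q.1 + d' * q.2 + f, by simp [hφ, toR2]⟩
  have hinjT : InjOn (fun p => (φ p).2) T := fun x hx y hy hxy =>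
    hinj (hTF hx) (hTF hy) (by simpa [hφ] using hxy)
  have := card_le_of_injOn_of_mem_Icc_int hs hint (fun p hp => hbd p (hF.1.subset (hTF hp))) hinjT
  linarith

theorem lw_ge_of_long_edges_general (Δ : Set (ℝ × ℝ))
    (hΔ : IsLatticePolygon Δ) (h2 : TwoDim Δ) (d : ℤ)
    (h : ∀ F, IsEdgeOf Δ F → ∃ T : Finset (ℝ × ℝ),
      ↑T ⊆ F ∧ (∀ p ∈ T, isLatticePt p) ∧ d + 1 ≤ (T.card : ℤ)) :
    d ≤ latticeWidth Δ := by
  obtain ⟨S, rfl⟩ := hΔ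
  rw [← Finset.coe_image] at h2 h ⊢
  have hne : (convexHull ℝ (S.image toR2 : Set (ℝ × ℝ))).Nonempty :=
    AffineSubspace.nonempty_of_affineSpan_eq_top ℝ _ _ h2
  rw [latticeWidth, if_neg hne.ne_empty]
  have hbdd := ((S.image toR2).finite_toSet.isCompact_convexHull (𝕜 := ℝ)).isBounded
  exact le_csInf (exists_widthLE_of_isBounded hbdd)
    fun s ⟨hs, hw⟩ => le_of_widthLE_of_long_edges _ h2 hs h hw

/-- If every edge of a two-dimensional lattice polygon Δ contains at least d+1 lattice
points, then lw(Δ) ≥ d. -/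
theorem lw_ge_of_long_edges (Δ : Set (ℝ × ℝ))
    (hΔ : IsLatticePolygon Δ) (h2 : TwoDim Δ) (d : ℤ) (hd : 0 ≤ d)
    (h : ∀ F, IsEdgeOf Δ F → ∃ T : Finset (ℝ × ℝ),
      ↑T ⊆ F ∧ (∀ p ∈ T, isLatticePt p) ∧ d + 1 ≤ (T.card : ℤ)) :
    d ≤ latticeWidth Δ :=
  lw_ge_of_long_edges_general Δ hΔ h2 d h
end
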